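/- For the reduced cubic polynomial s^3 + ((1 + n κa)/ς) s^2 + (n κv/ς) s + (n κp/ς) with ς > 0 and n > 0, all roots have negative real part if and only if κa > -1/n, κp > 0, and κv > ς κp / (1 + n κa). -/

import Mathlib

/-!
A real cubic has a real root `r`, so it factors as `(z - r) (z² + p z + q)`, and all its roots
lie in the open left half-plane iff `r < 0`, `p > 0` and `q > 0` (for the quadratic, split on the
sign of the discriminant). Comparing coefficients, `A = p - r`, `B = q - r p`, `C = -r q` and
`A B - C = p (B + r²)`, which turns these three conditions into the Routh–Hurwitz conditions
`A > 0`, `C > 0`, `A B > C`. For the platoon polynomial these rescale by `ς` and `n` into the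
stated conditions on the gains.
-/

lemma exists_cubic_eq_zero (A B C : ℝ) : ∃ r : ℝ, r ^ 3 + A * r ^ 2 + B * r + C = 0 := by
  set M : ℝ := 1 + |A| + |B| + |C|
  have hM : 1 ≤ M := by linarith [abs_nonneg A, abs_nonneg B, abs_nonneg C]
  have hA := abs_le.mp (le_refl |A|)
  have hB := abs_le.mp (le_refl |B|)
  have hC := abs_le.mp (le_refl |C|)
  have hcont : ContinuousOn (fun x : ℝ => x ^ 3 + A * x ^ 2 + B * x + C) (Set.Icc (-M) M) := by
    fun_prop
  obtain ⟨r, -, hr⟩ := intermediate_value_Icc (by linarith) hcont (show (0 : ℝ) ∈ Set.Icc _ _ from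
    ⟨by nlinarith [mul_le_mul_of_nonneg_right hA.2 (sq_nonneg M)],
     by nlinarith [mul_le_mul_of_nonneg_right hA.1 (sq_nonneg M)]⟩)
  exact ⟨r, hr⟩

lemma quadratic_roots_re_neg_iff (p q : ℝ) :
    (∀ w : ℂ, w ^ 2 + p * w + q = 0 → w.re < 0) ↔ 0 < p ∧ 0 < q := by
  constructor
  · intro h
    rcases le_or_gt 0 (p ^ 2 - 4 * q) with hD | hD
    · obtain ⟨s, hs2⟩ : ∃ s, s ^ 2 = p ^ 2 - 4 * q := ⟨√(p ^ 2 - 4 * q), Real.sq_sqrt hD⟩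
      have hroot : ∀ x : ℝ, x ^ 2 + p * x + q = 0 → x < 0 := fun x hx => by
        simpa using h x (by exact_mod_cast hx)
      have h₁ := hroot ((-p + s) / 2) (by linear_combination hs2 / 4)
      have h₂ := hroot ((-p - s) / 2) (by linear_combination hs2 / 4)
      exact ⟨by linarith, by nlinarith [mul_pos_of_neg_of_neg h₁ h₂]⟩
    · obtain ⟨s, hs2⟩ : ∃ s, s ^ 2 = 4 * q - p ^ 2 := ⟨√(4 * q - p ^ 2), Real.sq_sqrt (by linarith)⟩
      have hre := h ((-p + s * Complex.I) / 2) (by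
        linear_combination (-(1 : ℂ) / 4) * (by exact_mod_cast hs2 : (s : ℂ) ^ 2 = 4 * q - p ^ 2)
          + ((s : ℂ) ^ 2 / 4) * Complex.I_sq)
      simp only [Complex.div_ofNat_re, Complex.add_re, Complex.neg_re, Complex.ofReal_re,
        Complex.mul_re, Complex.I_re, mul_zero, Complex.ofReal_im, Complex.I_im, mul_one, sub_self,
        add_zero] at hre
      exact ⟨by linarith, by nlinarith⟩
  · rintro ⟨hp, hq⟩ w hw
    have hre := congrArg Complex.re hw
    have him := congrArg Complex.im hw
    simp only [pow_two, Complex.add_re, Complex.mul_re, Complex.ofReal_re, Complex.ofReal_im,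
      zero_mul, sub_zero, Complex.zero_re, Complex.add_im, Complex.mul_im, add_zero,
      Complex.zero_im] at hre him
    by_contra! hx
    have him0 : w.im = 0 := by
      have : w.im * (2 * w.re + p) = 0 := by linear_combination him
      exact (mul_eq_zero.mp this).resolve_right (by positivity)
    rw [him0] at hre
    nlinarith

lemma mul_quadratic_roots_re_neg_iff (r p q : ℝ) :
    (∀ z : ℂ, (z - r) * (z ^ 2 + p * z + q) = 0 → z.re < 0) ↔ r < 0 ∧ 0 < p ∧ 0 < q := by
  simp only [mul_eq_zero, or_imp, forall_and, sub_eq_zero, forall_eq, Complex.ofReal_re,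
    quadratic_roots_re_neg_iff]

lemma cubic_hurwitz_iff_of_root {A B C r : ℝ} (hr : r ^ 3 + A * r ^ 2 + B * r + C = 0) :
    (r < 0 ∧ 0 < A + r ∧ 0 < B + A * r + r ^ 2) ↔ (0 < A ∧ 0 < C ∧ C < A * B) := by
  have hC : C = -r * (B + A * r + r ^ 2) := by linear_combination hr
  have hABC : A * B - C = (A + r) * (B + r ^ 2) := by rw [hC]; ring
  constructor
  · rintro ⟨hr, hp, hq⟩
    have hBr : 0 < B + r ^ 2 := by nlinarith [mul_neg_of_pos_of_neg hp hr]
    exact ⟨by linarith, hC ▸ mul_pos (neg_pos.mpr hr) hq, sub_pos.mp (hABC ▸ mul_pos hp hBr)⟩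
  · rintro ⟨hA, hC₀, hAB⟩
    have hB : 0 < B := pos_of_mul_pos_right (hC₀.trans hAB) hA.le
    have hr : r < 0 := by
      by_contra! hr
      nlinarith [pow_nonneg hr 3, mul_nonneg hA.le (sq_nonneg r), mul_nonneg hB.le hr]
    have hBr : 0 < B + r ^ 2 := by positivity
    exact ⟨hr, pos_of_mul_pos_left (hABC ▸ sub_pos.mpr hAB) hBr.le,
      pos_of_mul_pos_right (hC ▸ hC₀) (neg_pos.mpr hr).le⟩

theorem cubic_roots_re_neg_iff (A B C : ℝ) :
    (∀ z : ℂ, z ^ 3 + A * z ^ 2 + B * z + C = 0 → z.re < 0) ↔ 0 < A ∧ 0 < C ∧ C < A * B := by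
  obtain ⟨r, hr⟩ := exists_cubic_eq_zero A B C
  have hrC : (r : ℂ) ^ 3 + A * r ^ 2 + B * r + C = 0 := by exact_mod_cast hr
  have hfactor (z : ℂ) : z ^ 3 + A * z ^ 2 + B * z + C =
      (z - r) * (z ^ 2 + (A + r : ℝ) * z + (B + A * r + r ^ 2 : ℝ)) := by
    push_cast
    linear_combination hrC
  simp_rw [hfactor, mul_quadratic_roots_re_neg_iff, cubic_hurwitz_iff_of_root hr]

/-- Stability of the reduced cubic characteristic polynomial (integral gain `κs = 0`). -/
theorem platoon_cubic_stability (ς n κp κv κa : ℝ) (hς : ς > 0) (hn : n > 0) :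
    (∀ z : ℂ, z ^ 3 + (((1 + n * κa) / ς : ℝ) : ℂ) * z ^ 2 + ((n * κv / ς : ℝ) : ℂ) * z +
        ((n * κp / ς : ℝ) : ℂ) = 0 → z.re < 0) ↔
    (κa > -1 / n ∧ κp > 0 ∧ κv > ς * κp / (1 + n * κa)) := by
  rw [cubic_roots_re_neg_iff, div_pos_iff_of_pos_right hς, div_pos_iff_of_pos_right hς,
    mul_pos_iff_of_pos_left hn]
  have hA : 0 < 1 + n * κa ↔ κa > -1 / n := by
    rw [gt_iff_lt, div_lt_iff₀ hn]
    constructor <;> intro <;> linarith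
  rw [← hA]
  refine and_congr_right fun ha => and_congr_right fun _ => ?_
  rw [gt_iff_lt, div_lt_iff₀ ha, div_mul_div_comm, div_lt_div_iff₀ hς (by positivity),
    show n * κp * (ς * ς) = n * ς * (ς * κp) by ring,
    show (1 + n * κa) * (n * κv) * ς = n * ς * (κv * (1 + n * κa)) by ring,
    mul_lt_mul_iff_right₀ (by positivity)]
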